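/- Fix an integer n ≥ 1 and a real number p > 0 with p ≠ 1, and define F : (0,∞) × (0,∞) → ℝ by F(a,b) = (b/a)^{(np+n)/(n+p)} · ((b+1)/(a+1))^{p/(n+p)} · B(p+1, (b+1)n/a) − B(p+1, (a+1)n/a)^{p/(n+p)} · B(p+1, (b+1)n/b)^{n/(n+p)}. Then F(1,1) = 0 and the partial derivative of F with respect to b at the point (1,1) is nonzero. -/

import Mathlib

/-- The digamma function: the logarithmic derivative of the Gamma function. -/
noncomputable def digamma (x : ℝ) : ℝ := deriv Real.Gamma x / Real.Gamma x

/-- The Beta function `B(x,y) = ∫₀¹ t^(x-1) (1-t)^(y-1) dt`. -/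
noncomputable def Beta (x y : ℝ) : ℝ := ∫ t in (0:ℝ)..1, t ^ (x - 1) * (1 - t) ^ (y - 1)

/-!
Both terms of `F(1, ·)` equal `β = B(p+1, 2n)` at `b = 1`, and differentiating there gives
`(n+p) ∂_b F(1,1) = β (n(p+1) + p/2 - n(2n+p) S)`, where `S = -∂_y log B(p+1, y)` at `y = 2n`,
i.e. `S = ψ(2n+p+1) - ψ(2n)`. Differentiating the recurrence `(x+y) B(x,y+1) = y B(x,y)`
(integration by parts) gives `S(y) - S(y+1) = 1/y - 1/(x+y)`, and `0 ≤ S(y) ≤ x/(y-1)`, so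
`S = Σ_j (1/(2n+j) - 1/(2n+p+1+j))`. With `m = 2n`, the constant `(m(p+1)+p)/m` is the telescoping
sum of `v_j - v_{j+1}` for `v_j = (m+p)/(m+j) + p(m+1)/(m+1+j)`, and termwise
`(m+p)(1/(m+j) - 1/(m+p+1+j)) - (v_j - v_{j+1}) = p(p-1)(j+1)/((m+j+1)(m+j+2)(m+p+1+j))`,
which has the sign of `p - 1` for every `j`.
-/

open Real Filter Topology intervalIntegral MeasureTheory Set

lemma continuous_rpow_mul_one_sub_rpow {a b : ℝ} (ha : 0 ≤ a) (hb : 0 ≤ b) :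
    Continuous fun t : ℝ => t ^ a * (1 - t) ^ b :=
  (continuous_rpow_const ha).mul
    ((continuous_rpow_const hb).comp (continuous_const.sub continuous_id))

lemma intervalIntegrable_rpow_mul_one_sub_rpow {a b : ℝ} (ha : 0 ≤ a) (hb : 0 ≤ b) :
    IntervalIntegrable (fun t : ℝ => t ^ a * (1 - t) ^ b) volume 0 1 :=
  (continuous_rpow_mul_one_sub_rpow ha hb).intervalIntegrable 0 1

lemma abs_rpow_mul_one_sub_rpow_mul_log_le {a b t : ℝ} (ha : 0 ≤ a) (hb : 0 ≤ b)
    (ht : t ∈ Icc (0:ℝ) 1) : |t ^ a * (1 - t) ^ b * log (1 - t)| ≤ |log (1 - t)| := by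
  have h1t : 0 ≤ 1 - t := by linarith [ht.2]
  rw [abs_mul, abs_of_nonneg (mul_nonneg (rpow_nonneg ht.1 a) (rpow_nonneg h1t b))]
  refine mul_le_of_le_one_left (abs_nonneg _) ?_
  exact mul_le_one₀ (rpow_le_one ht.1 ht.2 ha) (rpow_nonneg h1t b)
    (rpow_le_one h1t (by linarith [ht.1]) hb)

lemma intervalIntegrable_abs_log_one_sub :
    IntervalIntegrable (fun t : ℝ => |log (1 - t)|) volume 0 1 := by
  simpa using (intervalIntegrable_log' (a := 1) (b := 0)).comp_sub_left 1 |>.norm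

lemma intervalIntegrable_rpow_mul_one_sub_rpow_mul_log {a b : ℝ} (ha : 0 ≤ a) (hb : 0 ≤ b) :
    IntervalIntegrable (fun t : ℝ => t ^ a * (1 - t) ^ b * log (1 - t)) volume 0 1 := by
  refine intervalIntegrable_abs_log_one_sub.mono_fun' (by fun_prop) ?_
  rw [uIoc_of_le zero_le_one, EventuallyLE, ae_restrict_iff' measurableSet_Ioc]
  exact .of_forall fun t ht => abs_rpow_mul_one_sub_rpow_mul_log_le ha hb (Ioc_subset_Icc_self ht)

lemma tendsto_const_div_add_natCast (c a : ℝ) :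
    Tendsto (fun j : ℕ => c / (a + j)) atTop (𝓝 0) :=
  tendsto_const_nhds.div_atTop (tendsto_atTop_add_const_left _ a tendsto_natCast_atTop_atTop)

lemma hasSum_sub_succ_of_antitone {a : ℕ → ℝ} (ha : Antitone a) (h0 : Tendsto a atTop (𝓝 0)) :
    HasSum (fun j => a j - a (j + 1)) (a 0) := by
  refine (hasSum_iff_tendsto_nat_of_nonneg (fun j => sub_nonneg.2 (ha j.le_succ)) _).2 ?_
  simp only [Finset.sum_range_sub']
  simpa using (tendsto_const_nhds (x := a 0)).sub h0

section Beta

variable {x y : ℝ}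

lemma Beta_pos (hx : 1 ≤ x) (hy : 1 ≤ y) : 0 < Beta x y :=
  intervalIntegral_pos_of_pos_on
    (intervalIntegrable_rpow_mul_one_sub_rpow (by linarith) (by linarith))
    (fun t ht => mul_pos (rpow_pos_of_pos ht.1 _) (rpow_pos_of_pos (by linarith [ht.2]) _))
    one_pos

lemma Beta_add_one_fst_add_Beta_add_one_snd (hx : 1 ≤ x) (hy : 1 ≤ y) :
    Beta (x + 1) y + Beta x (y + 1) = Beta x y := by
  simp only [Beta, add_sub_cancel_right]
  rw [← integral_add (intervalIntegrable_rpow_mul_one_sub_rpow (by linarith) (by linarith))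
    (intervalIntegrable_rpow_mul_one_sub_rpow (by linarith) (by linarith))]
  refine integral_congr fun t ht => ?_
  rw [uIcc_of_le zero_le_one] at ht
  have split_t : t ^ x = t ^ (x - 1) * t := by
    rw [← rpow_add_one' ht.1 (by linarith), sub_add_cancel]
  have split_one_sub_t : (1 - t) ^ y = (1 - t) ^ (y - 1) * (1 - t) := by
    rw [← rpow_add_one' (by linarith [ht.2]) (by linarith), sub_add_cancel]
  simp only [split_t, split_one_sub_t]
  ring

lemma mul_Beta_add_one_snd (hx : 1 ≤ x) (hy : 1 ≤ y) :
    x * Beta x (y + 1) = y * Beta (x + 1) y := by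
  have hi₁ := (intervalIntegrable_rpow_mul_one_sub_rpow (a := x - 1) (b := y)
    (by linarith) (by linarith)).const_mul x
  have hi₂ := (intervalIntegrable_rpow_mul_one_sub_rpow (a := x) (b := y - 1)
    (by linarith) (by linarith)).const_mul y
  have ftc := integral_eq_sub_of_hasDerivAt_of_le zero_le_one
    (f := fun t : ℝ => t ^ x * (1 - t) ^ y)
    (f' := fun t => x * (t ^ (x - 1) * (1 - t) ^ y) - y * (t ^ x * (1 - t) ^ (y - 1)))
    (continuous_rpow_mul_one_sub_rpow (by linarith) (by linarith)).continuousOn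
    (fun t ht => ((hasDerivAt_rpow_const (Or.inl ht.1.ne')).mul
      (((hasDerivAt_id' t).const_sub 1).rpow_const (Or.inl (by linarith [ht.2])))).congr_deriv
        (by ring))
    (hi₁.sub hi₂)
  rw [integral_sub hi₁ hi₂, intervalIntegral.integral_const_mul,
    intervalIntegral.integral_const_mul] at ftc
  simp only [sub_self, zero_rpow (by linarith : x ≠ 0), zero_rpow (by linarith : y ≠ 0), mul_zero,
    zero_mul, sub_zero] at ftc
  simp only [Beta, add_sub_cancel_right]
  linarith

lemma add_mul_Beta_add_one_snd (hx : 1 ≤ x) (hy : 1 ≤ y) :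
    (x + y) * Beta x (y + 1) = y * Beta x y := by
  linear_combination mul_Beta_add_one_snd hx hy +
    y * Beta_add_one_fst_add_Beta_add_one_snd hx hy

lemma hasDerivAt_Beta_snd (hx : 1 ≤ x) (hy : 1 < y) :
    HasDerivAt (Beta x) (∫ t in (0:ℝ)..1, t ^ (x - 1) * (1 - t) ^ (y - 1) * log (1 - t)) y := by
  have hball : ∀ z ∈ Metric.ball y (y - 1), 0 ≤ z - 1 := fun z hz => by
    rw [Metric.mem_ball, dist_eq, abs_lt] at hz; linarith
  refine (hasDerivAt_integral_of_dominated_loc_of_deriv_le (μ := volume)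
    (F := fun z t => t ^ (x - 1) * (1 - t) ^ (z - 1))
    (F' := fun z t => t ^ (x - 1) * (1 - t) ^ (z - 1) * log (1 - t))
    (Metric.ball_mem_nhds y (by linarith : 0 < y - 1)) ?_
    (intervalIntegrable_rpow_mul_one_sub_rpow (by linarith) (by linarith))
    (by fun_prop) ?_ intervalIntegrable_abs_log_one_sub ?_).2
  · filter_upwards [Metric.ball_mem_nhds y (by linarith : 0 < y - 1)] with z hz
    exact (continuous_rpow_mul_one_sub_rpow (by linarith) (hball z hz)).aestronglyMeasurable
  · refine .of_forall fun t ht z hz => ?_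
    rw [uIoc_of_le zero_le_one] at ht
    exact abs_rpow_mul_one_sub_rpow_mul_log_le (by linarith) (hball z hz) (Ioc_subset_Icc_self ht)
  · filter_upwards [Measure.ae_ne volume 1] with t ht1 ht z _
    rw [uIoc_of_le zero_le_one] at ht
    have h1t : 0 < 1 - t := sub_pos.2 (lt_of_le_of_ne ht.2 ht1)
    exact (((hasStrictDerivAt_const_rpow h1t (z - 1)).hasDerivAt.comp z
      ((hasDerivAt_id' z).sub_const 1)).const_mul _).congr_deriv (by ring)

lemma neg_integral_rpow_mul_log_le_Beta (hx : 1 ≤ x) (hy : 2 ≤ y) :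
    -∫ t in (0:ℝ)..1, t ^ (x - 1) * (1 - t) ^ (y - 1) * log (1 - t) ≤ Beta (x + 1) (y - 1) := by
  rw [← intervalIntegral.integral_neg, Beta, add_sub_cancel_right]
  refine integral_mono_on zero_le_one
    (intervalIntegrable_rpow_mul_one_sub_rpow_mul_log (by linarith) (by linarith)).neg
    (intervalIntegrable_rpow_mul_one_sub_rpow (by linarith) (by linarith)) fun t ht => ?_
  rcases ht.2.lt_or_eq with ht1 | rfl
  · have h1t : 0 < 1 - t := sub_pos.2 ht1
    have hlog : -log (1 - t) ≤ (1 - t)⁻¹ - 1 := by linarith [one_sub_inv_le_log_of_pos h1t]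
    have split_t : t ^ x = t ^ (x - 1) * t := by
      rw [← rpow_add_one' ht.1 (by linarith), sub_add_cancel]
    have split_one_sub_t : (1 - t) ^ (y - 1) = (1 - t) ^ (y - 1 - 1) * (1 - t) := by
      rw [← rpow_add_one' h1t.le (by linarith), sub_add_cancel]
    calc -(t ^ (x - 1) * (1 - t) ^ (y - 1) * log (1 - t))
        = t ^ (x - 1) * (1 - t) ^ (y - 1) * -log (1 - t) := by ring
      _ ≤ t ^ (x - 1) * (1 - t) ^ (y - 1) * ((1 - t)⁻¹ - 1) :=
        mul_le_mul_of_nonneg_left hlog (mul_nonneg (rpow_nonneg ht.1 _) (rpow_nonneg h1t.le _))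
      _ = t ^ x * (1 - t) ^ (y - 1 - 1) := by
        rw [split_t, split_one_sub_t]; field_simp; ring
  · simp only [sub_self, zero_rpow (by linarith : y - 1 ≠ 0), mul_zero, zero_mul, neg_zero]
    positivity

lemma logDeriv_Beta_snd_nonpos (hx : 1 ≤ x) (hy : 1 < y) : logDeriv (Beta x) y ≤ 0 := by
  rw [logDeriv_apply, (hasDerivAt_Beta_snd hx hy).deriv]
  refine div_nonpos_of_nonpos_of_nonneg ?_ (Beta_pos hx hy.le).le
  rw [← neg_nonneg, ← intervalIntegral.integral_neg]
  refine integral_nonneg zero_le_one fun t ht => neg_nonneg.2 (mul_nonpos_of_nonneg_of_nonpos ?_ ?_)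
  · exact mul_nonneg (rpow_nonneg ht.1 _) (rpow_nonneg (sub_nonneg.2 ht.2) _)
  · exact log_nonpos (sub_nonneg.2 ht.2) (by linarith [ht.1])

lemma neg_div_le_logDeriv_Beta_snd (hx : 1 ≤ x) (hy : 2 ≤ y) :
    -(x / (y - 1)) ≤ logDeriv (Beta x) y := by
  have hB := Beta_pos hx (by linarith : 1 ≤ y)
  have hrec := mul_Beta_add_one_snd hx (by linarith : 1 ≤ y - 1)
  rw [sub_add_cancel] at hrec
  have hbound := neg_integral_rpow_mul_log_le_Beta hx hy
  rw [logDeriv_apply, (hasDerivAt_Beta_snd hx (by linarith)).deriv, neg_le, ← neg_div,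
    div_le_div_iff₀ hB (by linarith)]
  nlinarith

lemma logDeriv_Beta_add_one_snd (hx : 1 ≤ x) (hy : 1 < y) :
    logDeriv (Beta x) (y + 1) = logDeriv (Beta x) y + (1 / y - 1 / (x + y)) := by
  have hd₀ := (hasDerivAt_Beta_snd hx hy).differentiableAt.hasDerivAt
  have hd₁ := (hasDerivAt_Beta_snd hx (by linarith : 1 < y + 1)).differentiableAt.hasDerivAt
    |>.comp_add_const y 1
  have hrec : (fun z => (x + z) * Beta x (z + 1)) =ᶠ[𝓝 y] fun z => z * Beta x z := by
    filter_upwards [eventually_ge_nhds hy] with z hz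
    exact add_mul_Beta_add_one_snd hx hz
  have hderiv := (((hasDerivAt_id' y).const_add x).mul hd₁).congr_of_eventuallyEq hrec.symm
    |>.unique ((hasDerivAt_id' y).mul hd₀)
  have hB₀ := Beta_pos hx hy.le
  have hB₁ := Beta_pos hx (by linarith : 1 ≤ y + 1)
  have hval := add_mul_Beta_add_one_snd hx hy.le
  rw [logDeriv_apply, logDeriv_apply]
  field_simp
  linear_combination (y * Beta x y) * hderiv - (y * deriv (Beta x) y + Beta x y) * hval

lemma hasSum_neg_logDeriv_Beta_snd (hx : 1 ≤ x) (hy : 1 < y) :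
    HasSum (fun j : ℕ => 1 / (y + j) - 1 / (x + y + j)) (-logDeriv (Beta x) y) := by
  set a : ℕ → ℝ := fun j => -logDeriv (Beta x) (y + j) with ha
  have hstep : ∀ j : ℕ, a j - a (j + 1) = 1 / (y + j) - 1 / (x + y + j) := fun j => by
    have h := logDeriv_Beta_add_one_snd hx (by linarith [j.cast_nonneg (α := ℝ)] : 1 < y + j)
    simp only [ha, Nat.cast_succ, ← add_assoc, h]
    ring
  have hanti : Antitone a := antitone_nat_of_succ_le fun j => by
    have : 1 / (x + y + j) ≤ 1 / (y + j) := one_div_le_one_div_of_le (by positivity) (by linarith)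
    linarith [hstep j]
  have hlim : Tendsto a atTop (𝓝 0) := by
    refine tendsto_of_tendsto_of_tendsto_of_le_of_le' tendsto_const_nhds
      (tendsto_const_div_add_natCast x (y - 1)) (.of_forall fun j => ?_) ?_
    · exact neg_nonneg.2 (logDeriv_Beta_snd_nonpos hx (by linarith [j.cast_nonneg (α := ℝ)]))
    · filter_upwards [eventually_ge_atTop 1] with j hj
      have hj' : (1 : ℝ) ≤ j := by exact_mod_cast hj
      have := neg_div_le_logDeriv_Beta_snd hx (by linarith : 2 ≤ y + j)
      rw [show y + j - 1 = y - 1 + j by ring] at this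
      linarith
  have hsum := hasSum_sub_succ_of_antitone hanti hlim
  simp only [hstep] at hsum
  simpa [ha] using hsum

end Beta

lemma mul_mul_ne_of_hasSum_one_div_sub_one_div {m p S : ℝ} (hm : 0 < m) (hp : 0 < p)
    (hp1 : p ≠ 1) (hS : HasSum (fun j : ℕ => 1 / (m + j) - 1 / (p + 1 + m + j)) S) :
    m * (m + p) * S ≠ m * (p + 1) + p := by
  set v : ℕ → ℝ := fun j => (m + p) / (m + j) + p * (m + 1) / (m + 1 + j) with hv
  have hv_anti : Antitone v := antitone_nat_of_succ_le fun j => by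
    have hj : (0:ℝ) ≤ j := j.cast_nonneg
    simp only [hv, Nat.cast_succ, ← add_assoc]
    exact add_le_add (div_le_div_of_nonneg_left (by linarith) (by linarith) (by linarith))
      (div_le_div_of_nonneg_left (by positivity) (by linarith) (by linarith))
  have hv_lim : Tendsto v atTop (𝓝 0) := by
    simpa using (tendsto_const_div_add_natCast (m + p) m).add
      (tendsto_const_div_add_natCast (p * (m + 1)) (m + 1))
  have hpp : p * (p - 1) ≠ 0 := mul_ne_zero hp.ne' (sub_ne_zero.2 hp1)
  have hw : HasSum (fun j : ℕ => (j + 1) / ((m + j + 1) * (m + j + 2) * (p + 1 + m + j)))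
      (((m + p) * S - v 0) / (p * (p - 1))) := by
    refine (((hS.mul_left (m + p)).sub (hasSum_sub_succ_of_antitone hv_anti hv_lim)).div_const
      (p * (p - 1))).congr_fun fun j => ?_
    have hj : (0:ℝ) ≤ j := j.cast_nonneg
    simp only [hv, Nat.cast_succ]
    field_simp
    ring
  have hw_pos : 0 < ((m + p) * S - v 0) / (p * (p - 1)) :=
    (by positivity : (0:ℝ) < (0 + 1) / ((m + 0 + 1) * (m + 0 + 2) * (p + 1 + m + 0)))
      |>.trans_le (by simpa using le_hasSum hw 0 fun j _ => by positivity)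
  intro h
  have : (m + p) * S - v 0 = 0 := by
    simp only [hv, CharP.cast_eq_zero, add_zero]
    field_simp
    linear_combination h
  simp [this] at hw_pos

lemma hasDerivAt_rpow_mul_comp_sub_rpow_comp {B : ℝ → ℝ} {k α c d D : ℝ}
    (hB : HasDerivAt B D (2 * k)) (hB₀ : 0 < B (2 * k)) (hdc : d + c = 1) :
    HasDerivAt (fun b => b ^ α * ((b + 1) / 2) ^ d * B ((b + 1) * k) -
        B (2 * k) ^ d * B ((b + 1) * k / b) ^ c)
      ((α + d / 2) * B (2 * k) + (1 + c) * k * D) 1 := by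
  have hpow : HasDerivAt (fun b : ℝ => b ^ α) α 1 := by
    simpa using hasDerivAt_rpow_const (x := 1) (p := α) (Or.inl one_ne_zero)
  have hmean : HasDerivAt (fun b : ℝ => ((b + 1) / 2) ^ d) (d / 2) 1 := by
    convert (((hasDerivAt_id' (1:ℝ)).add_const 1).div_const 2).rpow_const (p := d)
      (Or.inl (by norm_num)) using 1
    norm_num [div_eq_inv_mul]
  have hsum : HasDerivAt (fun b : ℝ => B ((b + 1) * k)) (D * k) 1 :=
    hB.comp_of_eq 1 (by simpa using ((hasDerivAt_id' (1:ℝ)).add_const 1).mul_const k) (by ring)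
  have hquot : HasDerivAt (fun b : ℝ => B ((b + 1) * k / b)) (D * -k) 1 :=
    hB.comp_of_eq 1 ((((hasDerivAt_id' (1:ℝ)).add_const 1).mul_const k).div (hasDerivAt_id' 1)
      one_ne_zero |>.congr_deriv (by ring)) (by ring)
  have hquot_pow := hquot.rpow_const (p := c) (Or.inl (by norm_num [hB₀.ne']))
  refine ((hpow.mul hmean).mul hsum |>.sub (hquot_pow.const_mul (B (2 * k) ^ d))).congr_deriv ?_
  have hBpow : B (2 * k) ^ d * B (2 * k) ^ (c - 1) = 1 := by
    rw [← rpow_add hB₀, show d + (c - 1) = 0 by linarith, rpow_zero]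
  norm_num
  linear_combination (D * k * c) * hBpow

/-- For `n ≥ 1`, `p > 0` with `p ≠ 1`, and `F(a,b) = (b/a)^{(np+n)/(n+p)}·
((b+1)/(a+1))^{p/(n+p)}·B(p+1,(b+1)n/a) − B(p+1,(a+1)n/a)^{p/(n+p)}·
B(p+1,(b+1)n/b)^{n/(n+p)}`, one has `F(1,1) = 0` and the partial derivative of `F`
with respect to `b` at `(1,1)` is nonzero. -/
theorem F_at_one_one_and_deriv_ne_zero (n : ℕ) (hn : 1 ≤ n) (p : ℝ) (hp : 0 < p)
    (hp1 : p ≠ 1) (F : ℝ → ℝ → ℝ)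
    (hF : ∀ a b : ℝ, 0 < a → 0 < b →
      F a b = (b / a) ^ (((n : ℝ) * p + n) / ((n : ℝ) + p)) *
          ((b + 1) / (a + 1)) ^ (p / ((n : ℝ) + p)) * Beta (p + 1) ((b + 1) * n / a) -
        Beta (p + 1) ((a + 1) * n / a) ^ (p / ((n : ℝ) + p)) *
          Beta (p + 1) ((b + 1) * n / b) ^ ((n : ℝ) / ((n : ℝ) + p))) :
    F 1 1 = 0 ∧ deriv (fun b => F 1 b) 1 ≠ 0 := by
  have hn' : (1 : ℝ) ≤ n := by exact_mod_cast hn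
  have hnp : 0 < (n : ℝ) + p := by positivity
  have hB₀ : 0 < Beta (p + 1) (2 * n) := Beta_pos (by linarith) (by linarith)
  have hdc : p / ((n : ℝ) + p) + n / ((n : ℝ) + p) = 1 := by field_simp; ring
  have hslice : ∀ b, 0 < b → F 1 b = b ^ (((n : ℝ) * p + n) / ((n : ℝ) + p)) *
      ((b + 1) / 2) ^ (p / ((n : ℝ) + p)) * Beta (p + 1) ((b + 1) * n) -
      Beta (p + 1) (2 * n) ^ (p / ((n : ℝ) + p)) *
        Beta (p + 1) ((b + 1) * n / b) ^ ((n : ℝ) / ((n : ℝ) + p)) := fun b hb => by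
    rw [hF 1 b one_pos hb]; norm_num
  refine ⟨?_, ?_⟩
  · rw [hslice 1 one_pos, one_add_one_eq_two, div_self two_ne_zero, one_rpow, one_rpow, one_mul,
      one_mul, div_one, ← rpow_add hB₀, hdc, rpow_one, sub_self]
  · have h2n : (1 : ℝ) < 2 * n := by linarith
    have hD := (hasDerivAt_Beta_snd (x := p + 1) (by linarith) h2n).differentiableAt.hasDerivAt
    have hderiv := (hasDerivAt_rpow_mul_comp_sub_rpow_comp hD hB₀ hdc).congr_of_eventuallyEq
      (eventually_gt_nhds one_pos |>.mono hslice)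
    have hS := hasSum_neg_logDeriv_Beta_snd (x := p + 1) (by linarith) h2n
    have hne := mul_mul_ne_of_hasSum_one_div_sub_one_div (by positivity) hp hp1 hS
    rw [hderiv.deriv]
    rw [logDeriv_apply] at hne
    set β := Beta (p + 1) (2 * n)
    set D := deriv (Beta (p + 1)) (2 * n)
    intro h
    apply hne
    field_simp at h ⊢
    linear_combination -h
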